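/- arXiv:2202.04843 — 6 statements merged into one kernel-verified Lean document; each statement's English description precedes it below -/
import Mathlib

section
/- Let d ≥ 1, n ≥ 1, let μ be a positive measure on ℝ^d, and let p_{n-2}, p_{n-1}, p_n, p_{n+1} be families of μ-square-integrable functions ℝ^d → ℝ of sizes r_{n-2}, r_{n-1}, r_n, r_{n+1} respectively (with p_{-1} the empty family) that are jointly orthonormal, i.e. ∫ p_m(x) p_k(x)^T dμ(x) = δ_{m,k} I for all m,k ∈ {n-2,n-1,n,n+1}. Suppose for both coordinates i and j (i,j ∈ {1,…,d}) the pointwise three-term relations hold at degrees n-1 and n: x_l p_{n-1}(x) = B_{n,l} p_n(x) + A_{n,l} p_{n-1}(x) + B_{n-1,l}^T p_{n-2}(x) and x_l p_n(x) = B_{n+1,l} p_{n+1}(x) + A_{n+1,l} p_n(x) + B_{n,l}^T p_{n-1}(x) for l ∈ {i,j}, with matrices of compatible sizes, and assume all products of the form x_i x_j p_{m,a} p_{k,b} and x_l p_{m,a} p_{k,b} appearing are μ-integrable. Then the second commuting condition holds: B_{n,i} A_{n+1,j} + A_{n,i} B_{n,j} = B_{n,j} A_{n+1,i} + A_{n,j}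 B_{n,i}. -/
/-!
Write `⟨f, g⟩ = ∫ f gᵀ dμ` (`gramMatrix`). Both sides of the identity are `⟨x_i p_{n-1}, x_j p_n⟩`,
once as written and once with `i` and `j` exchanged, which does not change the integrand.
Expanding `x_i p_{n-1}` by the recurrence at degree `n - 1` gives
`B_{n,i} ⟨p_n, x_j p_n⟩ + A_{n,i} ⟨p_{n-1}, x_j p_n⟩ + B_{n-1,i}ᵀ ⟨p_{n-2}, x_j p_n⟩`;
moving `x_j` onto the other factor and expanding once more, orthonormality evaluates the three
brackets to `A_{n+1,j}`, `B_{n,j}` and `0`.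
-/

open MeasureTheory

/-- `f` is an orthonormal family in `L²(μ)`. -/
def OrthoSelf {d r : ℕ} (μ : Measure (Fin d → ℝ)) (f : Fin r → (Fin d → ℝ) → ℝ) : Prop :=
  ∀ a b, ∫ x, f a x * f b x ∂μ = if a = b then (1 : ℝ) else 0

/-- The families `f` and `g` are mutually orthogonal in `L²(μ)`. -/
def OrthoCross {d r s : ℕ} (μ : Measure (Fin d → ℝ)) (f : Fin r → (Fin d → ℝ) → ℝ)
    (g : Fin s → (Fin d → ℝ) → ℝ) : Prop :=
  ∀ a b, ∫ x, f a x * g b x ∂μ = 0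

/-- All products of the form `x_i x_j f_a g_b`, `x_i f_a g_b`, `x_j f_a g_b`
are `μ`-integrable. -/
def ProdInt {d r s : ℕ} (μ : Measure (Fin d → ℝ)) (i j : Fin d)
    (f : Fin r → (Fin d → ℝ) → ℝ) (g : Fin s → (Fin d → ℝ) → ℝ) : Prop :=
  ∀ a b, Integrable (fun x => x i * x j * f a x * g b x) μ ∧
    Integrable (fun x => x i * f a x * g b x) μ ∧
    Integrable (fun x => x j * f a x * g b x) μ

open Matrix

noncomputable section GramMatrix

variable {α ι κ ν σ : Type*} [MeasurableSpace α] {μ : Measure α}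

def gramMatrix (μ : Measure α) (f : ι → α → ℝ) (g : κ → α → ℝ) : Matrix ι κ ℝ :=
  of fun a b => ∫ x, f a x * g b x ∂μ

def weighted (w : α → ℝ) (f : ι → α → ℝ) : ι → α → ℝ :=
  fun a x => w x * f a x

def IntegrableAgainst (μ : Measure α) (f : ι → α → ℝ) (g : κ → α → ℝ) : Prop :=
  ∀ a b, Integrable (fun x => f a x * g b x) μ

def IsThreeTerm [Fintype ι] [Fintype κ] [Fintype ν] (w : α → ℝ) (r : ν → α → ℝ)
    (p : ι → α → ℝ) (q : κ → α → ℝ) (C : Matrix ν ι ℝ) (A : Matrix ι ι ℝ) (B : Matrix ι κ ℝ) :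
    Prop :=
  ∀ x k, w x * p k x = (∑ c, B k c * q c x) + (∑ c, A k c * p c x) + (∑ c, C c k * r c x)

lemma gramMatrix_transpose (f : ι → α → ℝ) (g : κ → α → ℝ) :
    (gramMatrix μ f g)ᵀ = gramMatrix μ g f := by
  ext a b
  simp only [gramMatrix, transpose_apply, of_apply, mul_comm]

lemma gramMatrix_weighted_left (w : α → ℝ) (f : ι → α → ℝ) (g : κ → α → ℝ) :
    gramMatrix μ (weighted w f) g = gramMatrix μ f (weighted w g) := by
  ext a b
  simp only [gramMatrix, weighted, of_apply]
  congr 1 with x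
  ring

lemma gramMatrix_weighted_weighted_comm (u v : α → ℝ) (f : ι → α → ℝ) (g : κ → α → ℝ) :
    gramMatrix μ (weighted u f) (weighted v g) = gramMatrix μ (weighted v f) (weighted u g) := by
  ext a b
  simp only [gramMatrix, weighted, of_apply]
  congr 1 with x
  ring

lemma integrableAgainst_of_memLp {f : ι → α → ℝ} {g : κ → α → ℝ}
    (hf : ∀ a, MemLp (f a) 2 μ) (hg : ∀ b, MemLp (g b) 2 μ) : IntegrableAgainst μ f g :=
  fun a b => (hf a).integrable_mul (hg b)

lemma integral_sum_const_mul_mul [Fintype κ] {g : κ → α → ℝ} {h : α → ℝ} (M : κ → ℝ)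
    (hg : ∀ c, Integrable (fun x => g c x * h x) μ) :
    ∫ x, (∑ c, M c * g c x) * h x ∂μ = ∑ c, M c * ∫ x, g c x * h x ∂μ := by
  simp_rw [Finset.sum_mul, mul_assoc]
  rw [integral_finsetSum _ fun c _ => (hg c).const_mul (M c)]
  simp_rw [integral_const_mul]

lemma integrable_sum_const_mul_mul [Fintype κ] {g : κ → α → ℝ} {h : α → ℝ} (M : κ → ℝ)
    (hg : ∀ c, Integrable (fun x => g c x * h x) μ) :
    Integrable (fun x => (∑ c, M c * g c x) * h x) μ := by
  simp_rw [Finset.sum_mul, mul_assoc]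
  exact integrable_finsetSum _ fun c _ => (hg c).const_mul (M c)

lemma IsThreeTerm.gramMatrix_weighted [Fintype ι] [Fintype κ] [Fintype ν]
    {w : α → ℝ} {r : ν → α → ℝ} {p : ι → α → ℝ} {q : κ → α → ℝ}
    {C : Matrix ν ι ℝ} {A : Matrix ι ι ℝ} {B : Matrix ι κ ℝ} {s : σ → α → ℝ}
    (h : IsThreeTerm w r p q C A B) (hq : IntegrableAgainst μ q s)
    (hp : IntegrableAgainst μ p s) (hr : IntegrableAgainst μ r s) :
    gramMatrix μ (weighted w p) s =
      B * gramMatrix μ q s + A * gramMatrix μ p s + Cᵀ * gramMatrix μ r s := by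
  ext k m
  have iq := integrable_sum_const_mul_mul (B k) (hq · m)
  have ip := integrable_sum_const_mul_mul (A k) (hp · m)
  have ir := integrable_sum_const_mul_mul (fun c => C c k) (hr · m)
  simp only [gramMatrix, weighted, of_apply, Matrix.add_apply, mul_apply, transpose_apply]
  simp_rw [h _ k, add_mul]
  rw [integral_add (iq.fun_add ip) ir, integral_add iq ip, integral_sum_const_mul_mul _ (hq · m),
    integral_sum_const_mul_mul _ (hp · m), integral_sum_const_mul_mul _ (hr · m)]

end GramMatrix

section Recurrence

variable {α ι₀ ι₁ ι₂ ι₃ : Type*} [MeasurableSpace α] {μ : Measure α}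
  [Fintype ι₀] [Fintype ι₁] [Fintype ι₂] [Fintype ι₃]
  {p₀ : ι₀ → α → ℝ} {p₁ : ι₁ → α → ℝ} {p₂ : ι₂ → α → ℝ} {p₃ : ι₃ → α → ℝ}

theorem gramMatrix_weighted_weighted_eq_of_isThreeTerm [DecidableEq ι₂] {u v : α → ℝ}
    {C₀ C₀' : Matrix ι₀ ι₁ ℝ} {A₁ A₁' : Matrix ι₁ ι₁ ℝ} {B₁ B₁' : Matrix ι₁ ι₂ ℝ}
    {A₂' : Matrix ι₂ ι₂ ℝ} {B₂' : Matrix ι₂ ι₃ ℝ}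
    (hu₁ : IsThreeTerm u p₀ p₁ p₂ C₀ A₁ B₁) (hv₁ : IsThreeTerm v p₀ p₁ p₂ C₀' A₁' B₁')
    (hv₂ : IsThreeTerm v p₁ p₂ p₃ B₁' A₂' B₂')
    (hL2₀ : ∀ a, MemLp (p₀ a) 2 μ) (hL2₁ : ∀ a, MemLp (p₁ a) 2 μ)
    (hL2₂ : ∀ a, MemLp (p₂ a) 2 μ) (hL2₃ : ∀ a, MemLp (p₃ a) 2 μ)
    (hv₀₂ : IntegrableAgainst μ p₀ (weighted v p₂))
    (hv₁₂ : IntegrableAgainst μ p₁ (weighted v p₂))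
    (hv₂₂ : IntegrableAgainst μ p₂ (weighted v p₂))
    (h₀₁ : gramMatrix μ p₀ p₁ = 0) (h₀₂ : gramMatrix μ p₀ p₂ = 0) (h₀₃ : gramMatrix μ p₀ p₃ = 0)
    (h₁₂ : gramMatrix μ p₁ p₂ = 0) (h₂₃ : gramMatrix μ p₂ p₃ = 0)
    (h₂₂ : gramMatrix μ p₂ p₂ = 1) :
    gramMatrix μ (weighted u p₁) (weighted v p₂) = B₁ * A₂' + A₁ * B₁' := by
  have hA : gramMatrix μ p₂ (weighted v p₂) = A₂' := by
    rw [← gramMatrix_weighted_left, hv₂.gramMatrix_weighted (integrableAgainst_of_memLp hL2₃ hL2₂)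
      (integrableAgainst_of_memLp hL2₂ hL2₂) (integrableAgainst_of_memLp hL2₁ hL2₂),
      ← gramMatrix_transpose p₂ p₃, h₂₃, h₂₂, h₁₂]
    simp
  have hB : gramMatrix μ p₁ (weighted v p₂) = B₁' := by
    rw [← gramMatrix_weighted_left, hv₁.gramMatrix_weighted (integrableAgainst_of_memLp hL2₂ hL2₂)
      (integrableAgainst_of_memLp hL2₁ hL2₂) (integrableAgainst_of_memLp hL2₀ hL2₂), h₂₂, h₁₂, h₀₂]
    simp
  have h0 : gramMatrix μ p₀ (weighted v p₂) = 0 := by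
    rw [← gramMatrix_transpose, hv₂.gramMatrix_weighted (integrableAgainst_of_memLp hL2₃ hL2₀)
      (integrableAgainst_of_memLp hL2₂ hL2₀) (integrableAgainst_of_memLp hL2₁ hL2₀),
      ← gramMatrix_transpose p₀ p₃, ← gramMatrix_transpose p₀ p₂, ← gramMatrix_transpose p₀ p₁,
      h₀₁, h₀₂, h₀₃]
    simp
  rw [hu₁.gramMatrix_weighted hv₂₂ hv₁₂ hv₀₂, hA, hB, h0]
  simp

end Recurrence

section CoordinateFamilies

variable {d r s : ℕ} {μ : Measure (Fin d → ℝ)}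
  {f : Fin r → (Fin d → ℝ) → ℝ} {g : Fin s → (Fin d → ℝ) → ℝ}

lemma OrthoSelf.gramMatrix_eq_one (h : OrthoSelf μ f) : gramMatrix μ f f = 1 := by
  ext a b
  simp [gramMatrix, h a b, one_apply]

lemma OrthoCross.gramMatrix_eq_zero (h : OrthoCross μ f g) : gramMatrix μ f g = 0 := by
  ext a b
  exact h a b

lemma ProdInt.integrableAgainst_weighted_fst {i j : Fin d} (h : ProdInt μ i j f g) :
    IntegrableAgainst μ f (weighted (· i) g) :=
  fun a b => (h a b).2.1.congr (.of_forall fun x => by simp only [weighted]; ring)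

lemma ProdInt.integrableAgainst_weighted_snd {i j : Fin d} (h : ProdInt μ i j f g) :
    IntegrableAgainst μ f (weighted (· j) g) :=
  fun a b => (h a b).2.2.congr (.of_forall fun x => by simp only [weighted]; ring)

end CoordinateFamilies

theorem commuting_condition_two_general
    (d : ℕ)
    (rnm2 : ℕ) (rnm1 rn rnp1 : ℕ)
    (μ : Measure (Fin d → ℝ))
    (pnm2 : Fin rnm2 → (Fin d → ℝ) → ℝ)
    (pnm1 : Fin rnm1 → (Fin d → ℝ) → ℝ)
    (pn : Fin rn → (Fin d → ℝ) → ℝ)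
    (pnp1 : Fin rnp1 → (Fin d → ℝ) → ℝ)
    (hL2nm2 : ∀ a, MemLp (pnm2 a) 2 μ)
    (hL2nm1 : ∀ a, MemLp (pnm1 a) 2 μ)
    (hL2n : ∀ a, MemLp (pn a) 2 μ)
    (hL2np1 : ∀ a, MemLp (pnp1 a) 2 μ)
    (hON2 : OrthoSelf μ pn)
    (hOC01 : OrthoCross μ pnm2 pnm1) (hOC02 : OrthoCross μ pnm2 pn)
    (hOC03 : OrthoCross μ pnm2 pnp1) (hOC12 : OrthoCross μ pnm1 pn)
    (hOC23 : OrthoCross μ pn pnp1)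
    (i j : Fin d)
    (An : Fin d → Matrix (Fin rnm1) (Fin rnm1) ℝ)
    (Bnm1 : Fin d → Matrix (Fin rnm2) (Fin rnm1) ℝ)
    (Bn : Fin d → Matrix (Fin rnm1) (Fin rn) ℝ)
    (Anp1 : Fin d → Matrix (Fin rn) (Fin rn) ℝ)
    (Bnp1 : Fin d → Matrix (Fin rn) (Fin rnp1) ℝ)
    (httrnm1 : ∀ l ∈ ({i, j} : Set (Fin d)), ∀ (x : Fin d → ℝ) (k : Fin rnm1),
      x l * pnm1 k x =
        (∑ q, Bn l k q * pn q x) + (∑ a, An l k a * pnm1 a x) +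
          (∑ a, Bnm1 l a k * pnm2 a x))
    (httrn : ∀ l ∈ ({i, j} : Set (Fin d)), ∀ (x : Fin d → ℝ) (k : Fin rn),
      x l * pn k x =
        (∑ q, Bnp1 l k q * pnp1 q x) + (∑ a, Anp1 l k a * pn a x) +
          (∑ a, Bn l a k * pnm1 a x))
    (hint02 : ProdInt μ i j pnm2 pn)
    (hint12 : ProdInt μ i j pnm1 pn)
    (hint22 : ProdInt μ i j pn pn) :
    Bn i * Anp1 j + An i * Bn j = Bn j * Anp1 i + An j * Bn i := by
  have hi : i ∈ ({i, j} : Set (Fin d)) := Set.mem_insert i {j}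
  have hj : j ∈ ({i, j} : Set (Fin d)) := Set.mem_insert_of_mem i rfl
  have key : ∀ u ∈ ({i, j} : Set (Fin d)), ∀ v ∈ ({i, j} : Set (Fin d)),
      IntegrableAgainst μ pnm2 (weighted (· v) pn) →
      IntegrableAgainst μ pnm1 (weighted (· v) pn) → IntegrableAgainst μ pn (weighted (· v) pn) →
      gramMatrix μ (weighted (· u) pnm1) (weighted (· v) pn) = Bn u * Anp1 v + An u * Bn v :=
    fun u hu v hv h₀ h₁ h₂ => gramMatrix_weighted_weighted_eq_of_isThreeTerm
      (httrnm1 u hu) (httrnm1 v hv) (httrn v hv) hL2nm2 hL2nm1 hL2n hL2np1 h₀ h₁ h₂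
      hOC01.gramMatrix_eq_zero hOC02.gramMatrix_eq_zero hOC03.gramMatrix_eq_zero
      hOC12.gramMatrix_eq_zero hOC23.gramMatrix_eq_zero hON2.gramMatrix_eq_one
  calc Bn i * Anp1 j + An i * Bn j
      = gramMatrix μ (weighted (· i) pnm1) (weighted (· j) pn) :=
        (key i hi j hj hint02.integrableAgainst_weighted_snd hint12.integrableAgainst_weighted_snd
          hint22.integrableAgainst_weighted_snd).symm
    _ = gramMatrix μ (weighted (· j) pnm1) (weighted (· i) pn) :=
        gramMatrix_weighted_weighted_comm _ _ _ _
    _ = Bn j * Anp1 i + An j * Bn i :=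
        key j hj i hi hint02.integrableAgainst_weighted_fst hint12.integrableAgainst_weighted_fst
          hint22.integrableAgainst_weighted_fst

/-- the second commuting condition for the
recurrence matrices of a jointly orthonormal family satisfying the three-term relations. -/
theorem commuting_condition_two
    (d n : ℕ) (hd : 1 ≤ d) (hn : 1 ≤ n)
    (rnm2 : ℕ) (rnm1 rn rnp1 : ℕ) (hrnm1 : 0 < rnm1) (hrn : 0 < rn) (hrnp1 : 0 < rnp1)
    (μ : Measure (Fin d → ℝ))
    (pnm2 : Fin rnm2 → (Fin d → ℝ) → ℝ)
    (pnm1 : Fin rnm1 → (Fin d → ℝ) → ℝ)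
    (pn : Fin rn → (Fin d → ℝ) → ℝ)
    (pnp1 : Fin rnp1 → (Fin d → ℝ) → ℝ)
    (hL2nm2 : ∀ a, MemLp (pnm2 a) 2 μ)
    (hL2nm1 : ∀ a, MemLp (pnm1 a) 2 μ)
    (hL2n : ∀ a, MemLp (pn a) 2 μ)
    (hL2np1 : ∀ a, MemLp (pnp1 a) 2 μ)
    (hON0 : OrthoSelf μ pnm2) (hON1 : OrthoSelf μ pnm1)
    (hON2 : OrthoSelf μ pn) (hON3 : OrthoSelf μ pnp1)
    (hOC01 : OrthoCross μ pnm2 pnm1) (hOC02 : OrthoCross μ pnm2 pn)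
    (hOC03 : OrthoCross μ pnm2 pnp1) (hOC12 : OrthoCross μ pnm1 pn)
    (hOC13 : OrthoCross μ pnm1 pnp1) (hOC23 : OrthoCross μ pn pnp1)
    (i j : Fin d)
    (An : Fin d → Matrix (Fin rnm1) (Fin rnm1) ℝ)
    (Bnm1 : Fin d → Matrix (Fin rnm2) (Fin rnm1) ℝ)
    (Bn : Fin d → Matrix (Fin rnm1) (Fin rn) ℝ)
    (Anp1 : Fin d → Matrix (Fin rn) (Fin rn) ℝ)
    (Bnp1 : Fin d → Matrix (Fin rn) (Fin rnp1) ℝ)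
    (httrnm1 : ∀ l ∈ ({i, j} : Set (Fin d)), ∀ (x : Fin d → ℝ) (k : Fin rnm1),
      x l * pnm1 k x =
        (∑ q, Bn l k q * pn q x) + (∑ a, An l k a * pnm1 a x) +
          (∑ a, Bnm1 l a k * pnm2 a x))
    (httrn : ∀ l ∈ ({i, j} : Set (Fin d)), ∀ (x : Fin d → ℝ) (k : Fin rn),
      x l * pn k x =
        (∑ q, Bnp1 l k q * pnp1 q x) + (∑ a, Anp1 l k a * pn a x) +
          (∑ a, Bn l a k * pnm1 a x))
    (hint00 : ProdInt μ i j pnm2 pnm2) (hint01 : ProdInt μ i j pnm2 pnm1)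
    (hint02 : ProdInt μ i j pnm2 pn) (hint03 : ProdInt μ i j pnm2 pnp1)
    (hint11 : ProdInt μ i j pnm1 pnm1) (hint12 : ProdInt μ i j pnm1 pn)
    (hint13 : ProdInt μ i j pnm1 pnp1) (hint22 : ProdInt μ i j pn pn)
    (hint23 : ProdInt μ i j pn pnp1) (hint33 : ProdInt μ i j pnp1 pnp1) :
    Bn i * Anp1 j + An i * Bn j = Bn j * Anp1 i + An j * Bn i :=
  commuting_condition_two_general d rnm2 rnm1 rn rnp1 μ pnm2 pnm1 pn pnp1 hL2nm2 hL2nm1 hL2n hL2np1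
    hON2 hOC01 hOC02 hOC03 hOC12 hOC23 i j An Bnm1 Bn Anp1 Bnp1 httrnm1 httrn hint02 hint12 hint22
end

section
/- Let d ≥ 1, n ≥ 1, let μ be a positive measure on ℝ^d, and let p_{n-1}, p_n, p_{n+1}, p_{n+2} be families of μ-square-integrable functions ℝ^d → ℝ of sizes r_{n-1}, r_n, r_{n+1}, r_{n+2} respectively that are jointly orthonormal, i.e. ∫ p_m(x) p_k(x)^T dμ(x) = δ_{m,k} I for all m,k ∈ {n-1,n,n+1,n+2}. Suppose for both coordinates i and j (i,j ∈ {1,…,d}) the pointwise three-term relations hold at degrees n and n+1: x_l p_n(x) = B_{n+1,l} p_{n+1}(x) + A_{n+1,l} p_n(x) + B_{n,l}^T p_{n-1}(x) and x_l p_{n+1}(x) = B_{n+2,l} p_{n+2}(x) + A_{n+2,l} p_{n+1}(x) + B_{n+1,l}^T p_n(x) for l ∈ {i,j}, with matrices of compatible sizes, and assume all products of the form x_i x_j p_{m,a} p_{k,b} and x_l p_{m,a} p_{k,b} appearing are μ-integrable. Then the first commuting condition holds: B_{n+1,i} B_{n+1,j}^T + A_{n+1,i} A_{n+1,j} + B_{n,i}^T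 B_{n,j} = B_{n+1,j} B_{n+1,i}^T + A_{n+1,j} A_{n+1,i} + B_{n,j}^T B_{n,i}. -/
open MeasureTheory Matrix

section L2Orthonormal

variable {α ι κ : Type*} [MeasurableSpace α] {μ : Measure α}

def L2Orthonormal [DecidableEq ι] (μ : Measure α) (P : ι → α → ℝ) : Prop :=
  ∀ u v, ∫ x, P u x * P v x ∂μ = if u = v then 1 else 0

lemma L2Orthonormal.sumElim [DecidableEq ι] [DecidableEq κ] {f : ι → α → ℝ} {g : κ → α → ℝ}
    (hf : L2Orthonormal μ f) (hg : L2Orthonormal μ g) (hfg : ∀ a b, ∫ x, f a x * g b x ∂μ = 0) :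
    L2Orthonormal μ (Sum.elim f g) := by
  rintro (a | a) (b | b)
  · simpa using hf a b
  · simpa using hfg a b
  · simpa [mul_comm] using hfg b a
  · simpa using hg a b

variable [Fintype ι] [DecidableEq ι] {P : ι → α → ℝ}

lemma L2Orthonormal.integral_sum_mul_sum (hP : L2Orthonormal μ P)
    (hint : ∀ u v, Integrable (fun x => P u x * P v x) μ) (a b : ι → ℝ) :
    ∫ x, (∑ u, a u * P u x) * (∑ v, b v * P v x) ∂μ = ∑ u, a u * b u := by
  have hexpand : ∀ x, (∑ u, a u * P u x) * (∑ v, b v * P v x) =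
      ∑ u, ∑ v, a u * b v * (P u x * P v x) := fun x => by
    rw [Finset.sum_mul_sum]
    exact Finset.sum_congr rfl fun u _ => Finset.sum_congr rfl fun v _ => by ring
  simp_rw [hexpand]
  rw [integral_finsetSum _ fun u _ => integrable_finsetSum _ fun v _ => (hint u v).const_mul _]
  refine Finset.sum_congr rfl fun u _ => ?_
  rw [integral_finsetSum _ fun v _ => (hint u v).const_mul _]
  simp [integral_const_mul, hP u]

lemma L2Orthonormal.integral_sum_mul (hP : L2Orthonormal μ P)
    (hint : ∀ u v, Integrable (fun x => P u x * P v x) μ) (a : ι → ℝ) (v : ι) :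
    ∫ x, (∑ u, a u * P u x) * P v x ∂μ = a v := by
  simpa [Pi.single_apply] using hP.integral_sum_mul_sum hint a (Pi.single v 1)

lemma L2Orthonormal.mul_transpose_comm (hP : L2Orthonormal μ P)
    (hint : ∀ u v, Integrable (fun x => P u x * P v x) μ) {X Y : α → ℝ} {p : κ → α → ℝ}
    {a b : Matrix κ ι ℝ} (ha : ∀ x k, X x * p k x = ∑ u, a k u * P u x)
    (hb : ∀ x k, Y x * p k x = ∑ u, b k u * P u x) :
    a * bᵀ = b * aᵀ := by
  ext k m
  calc (a * bᵀ) k m = ∫ x, (X x * p k x) * (Y x * p m x) ∂μ := by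
        simp only [ha, hb, hP.integral_sum_mul_sum hint, mul_apply, transpose_apply]
    _ = ∫ x, (Y x * p k x) * (X x * p m x) ∂μ := by
        congr 1; ext x; ring
    _ = (b * aᵀ) k m := by
        simp only [ha, hb, hP.integral_sum_mul_sum hint, mul_apply, transpose_apply]

lemma L2Orthonormal.coeff_symm (hP : L2Orthonormal μ P)
    (hint : ∀ u v, Integrable (fun x => P u x * P v x) μ) {X : α → ℝ} {e : κ → ι}
    {a : Matrix κ ι ℝ} (ha : ∀ x k, X x * P (e k) x = ∑ u, a k u * P u x) (k m : κ) :
    a k (e m) = a m (e k) := by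
  calc a k (e m) = ∫ x, (X x * P (e k) x) * P (e m) x ∂μ := by
        simp only [ha, hP.integral_sum_mul hint]
    _ = ∫ x, (X x * P (e m) x) * P (e k) x ∂μ := by
        congr 1; ext x; ring
    _ = a m (e k) := by
        simp only [ha, hP.integral_sum_mul hint]

end L2Orthonormal

theorem commuting_condition_one_general
    (d : ℕ)
    (rnm1 rn rnp1 : ℕ)
    (μ : Measure (Fin d → ℝ))
    (pnm1 : Fin rnm1 → (Fin d → ℝ) → ℝ)
    (pn : Fin rn → (Fin d → ℝ) → ℝ)
    (pnp1 : Fin rnp1 → (Fin d → ℝ) → ℝ)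
    (hL2nm1 : ∀ a, MemLp (pnm1 a) 2 μ)
    (hL2n : ∀ a, MemLp (pn a) 2 μ)
    (hL2np1 : ∀ a, MemLp (pnp1 a) 2 μ)
    (hON0 : OrthoSelf μ pnm1) (hON1 : OrthoSelf μ pn)
    (hON2 : OrthoSelf μ pnp1)
    (hOC01 : OrthoCross μ pnm1 pn) (hOC02 : OrthoCross μ pnm1 pnp1)
    (hOC12 : OrthoCross μ pn pnp1)
    (i j : Fin d)
    (Bn : Fin d → Matrix (Fin rnm1) (Fin rn) ℝ)
    (Anp1 : Fin d → Matrix (Fin rn) (Fin rn) ℝ)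
    (Bnp1 : Fin d → Matrix (Fin rn) (Fin rnp1) ℝ)
    (httrn : ∀ l ∈ ({i, j} : Set (Fin d)), ∀ (x : Fin d → ℝ) (k : Fin rn),
      x l * pn k x =
        (∑ q, Bnp1 l k q * pnp1 q x) + (∑ a, Anp1 l k a * pn a x) +
          (∑ a, Bn l a k * pnm1 a x)) :
    Bnp1 i * (Bnp1 j)ᵀ + Anp1 i * Anp1 j + (Bn i)ᵀ * Bn j =
      Bnp1 j * (Bnp1 i)ᵀ + Anp1 j * Anp1 i + (Bn j)ᵀ * Bn i := by
  set P := Sum.elim pnm1 (Sum.elim pn pnp1)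
  set C : Fin d → Matrix (Fin rn) (Fin rnm1 ⊕ Fin rn ⊕ Fin rnp1) ℝ :=
    fun l => fromCols (Bn l)ᵀ (fromCols (Anp1 l) (Bnp1 l))
  have hP : L2Orthonormal μ P := .sumElim hON0 (.sumElim hON1 hON2 hOC12) <| by
    rintro a (b | b)
    exacts [hOC01 a b, hOC02 a b]
  have hL2 : ∀ u, MemLp (P u) 2 μ := by
    rintro (a | a | a)
    exacts [hL2nm1 a, hL2n a, hL2np1 a]
  have hint : ∀ u v, Integrable (fun x => P u x * P v x) μ := fun u v =>
    (hL2 u).integrable_mul (hL2 v)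
  have hexp : ∀ l ∈ ({i, j} : Set (Fin d)), ∀ x k, x l * pn k x = ∑ u, C l k u * P u x := by
    intro l hl x k
    simp only [httrn l hl x k, Fintype.sum_sum_type, C, P, fromCols_apply_inl, fromCols_apply_inr,
      transpose_apply, Sum.elim_inl, Sum.elim_inr]
    ring
  have hi : i ∈ ({i, j} : Set (Fin d)) := Set.mem_insert _ _
  have hj : j ∈ ({i, j} : Set (Fin d)) := Set.mem_insert_of_mem _ rfl
  have hAsymm : ∀ l ∈ ({i, j} : Set (Fin d)), (Anp1 l)ᵀ = Anp1 l := fun l hl => by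
    ext k m
    exact hP.coeff_symm hint (e := Sum.inr ∘ Sum.inl) (hexp l hl) m k
  have hgram := hP.mul_transpose_comm hint (hexp i hi) (hexp j hj)
  simpa only [C, transpose_fromCols, fromCols_mul_fromRows, transpose_transpose, hAsymm i hi,
    hAsymm j hj, add_comm, add_left_comm] using hgram

/-- the first commuting condition
`B_{n+1,i} B_{n+1,j}ᵀ + A_{n+1,i} A_{n+1,j} + B_{n,i}ᵀ B_{n,j} =
 B_{n+1,j} B_{n+1,i}ᵀ + A_{n+1,j} A_{n+1,i} + B_{n,j}ᵀ B_{n,i}` for the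
recurrence matrices of a jointly orthonormal family satisfying the three-term relations. -/
theorem commuting_condition_one
    (d n : ℕ) (hd : 1 ≤ d) (hn : 1 ≤ n)
    (rnm1 rn rnp1 rnp2 : ℕ)
    (hrnm1 : 0 < rnm1) (hrn : 0 < rn) (hrnp1 : 0 < rnp1) (hrnp2 : 0 < rnp2)
    (μ : Measure (Fin d → ℝ))
    (pnm1 : Fin rnm1 → (Fin d → ℝ) → ℝ)
    (pn : Fin rn → (Fin d → ℝ) → ℝ)
    (pnp1 : Fin rnp1 → (Fin d → ℝ) → ℝ)
    (pnp2 : Fin rnp2 → (Fin d → ℝ) → ℝ)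
    (hL2nm1 : ∀ a, MemLp (pnm1 a) 2 μ)
    (hL2n : ∀ a, MemLp (pn a) 2 μ)
    (hL2np1 : ∀ a, MemLp (pnp1 a) 2 μ)
    (hL2np2 : ∀ a, MemLp (pnp2 a) 2 μ)
    (hON0 : OrthoSelf μ pnm1) (hON1 : OrthoSelf μ pn)
    (hON2 : OrthoSelf μ pnp1) (hON3 : OrthoSelf μ pnp2)
    (hOC01 : OrthoCross μ pnm1 pn) (hOC02 : OrthoCross μ pnm1 pnp1)
    (hOC03 : OrthoCross μ pnm1 pnp2) (hOC12 : OrthoCross μ pn pnp1)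
    (hOC13 : OrthoCross μ pn pnp2) (hOC23 : OrthoCross μ pnp1 pnp2)
    (i j : Fin d)
    (Bn : Fin d → Matrix (Fin rnm1) (Fin rn) ℝ)
    (Anp1 : Fin d → Matrix (Fin rn) (Fin rn) ℝ)
    (Bnp1 : Fin d → Matrix (Fin rn) (Fin rnp1) ℝ)
    (Anp2 : Fin d → Matrix (Fin rnp1) (Fin rnp1) ℝ)
    (Bnp2 : Fin d → Matrix (Fin rnp1) (Fin rnp2) ℝ)
    (httrn : ∀ l ∈ ({i, j} : Set (Fin d)), ∀ (x : Fin d → ℝ) (k : Fin rn),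
      x l * pn k x =
        (∑ q, Bnp1 l k q * pnp1 q x) + (∑ a, Anp1 l k a * pn a x) +
          (∑ a, Bn l a k * pnm1 a x))
    (httrnp1 : ∀ l ∈ ({i, j} : Set (Fin d)), ∀ (x : Fin d → ℝ) (k : Fin rnp1),
      x l * pnp1 k x =
        (∑ q, Bnp2 l k q * pnp2 q x) + (∑ a, Anp2 l k a * pnp1 a x) +
          (∑ a, Bnp1 l a k * pn a x))
    (hint00 : ProdInt μ i j pnm1 pnm1) (hint01 : ProdInt μ i j pnm1 pn)
    (hint02 : ProdInt μ i j pnm1 pnp1) (hint03 : ProdInt μ i j pnm1 pnp2)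
    (hint11 : ProdInt μ i j pn pn) (hint12 : ProdInt μ i j pn pnp1)
    (hint13 : ProdInt μ i j pn pnp2) (hint22 : ProdInt μ i j pnp1 pnp1)
    (hint23 : ProdInt μ i j pnp1 pnp2) (hint33 : ProdInt μ i j pnp2 pnp2) :
    Bnp1 i * (Bnp1 j)ᵀ + Anp1 i * Anp1 j + (Bn i)ᵀ * Bn j =
      Bnp1 j * (Bnp1 i)ᵀ + Anp1 j * Anp1 i + (Bn j)ᵀ * Bn i :=
  commuting_condition_one_general d rnm1 rn rnp1 μ pnm1 pn pnp1 hL2nm1 hL2n hL2np1 hON0 hON1 hON2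
    hOC01 hOC02 hOC12 i j Bn Anp1 Bnp1 httrn
end

section
/- Let d ≥ 1, n ≥ 0, and let p_{n-1} : ℝ^d → ℝ^{r_{n-1}}, p_n : ℝ^d → ℝ^{r_n}, p_{n+1} : ℝ^d → ℝ^{r_{n+1}} be vector-valued functions (with p_{-1} := 0). Suppose that for every i ∈ {1,…,d} there are matrices A_{n+1,i} ∈ ℝ^{r_n×r_n}, B_{n+1,i} ∈ ℝ^{r_n×r_{n+1}}, B_{n,i} ∈ ℝ^{r_{n-1}×r_n} such that x_i p_n(x) = B_{n+1,i} p_{n+1}(x) + A_{n+1,i} p_n(x) + B_{n,i}^T p_{n-1}(x) for all x ∈ ℝ^d. Suppose further that the stacked matrix B_{n+1} ∈ ℝ^{d·r_n × r_{n+1}} obtained by vertically concatenating B_{n+1,1},…,B_{n+1,d} has rank r_{n+1}, and that Λ_{n+1} := Σ_{i=1}^d B_{n+1,i}^T B_{n+1,i} is a diagonal matrix. Then Λ_{n+1} is positive definite (hence invertible), and for all x ∈ ℝ^d: Λ_{n+1} p_{n+1}(x) = (Σ_{i=1}^d x_i B_{n+1,i}^T) p_n(x) − (Σ_{i=1}^d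 B_{n+1,i}^T A_{n+1,i}) p_n(x) − (Σ_{i=1}^d B_{n+1,i}^T B_{n,i}^T) p_{n-1}(x). -/
/-!
Stacking the blocks `B i` into one matrix `stack B` gives `∑ i, (B i)ᵀ * B i = (stack B)ᵀ * stack B`.
Full column rank makes `stack B` injective, so this Gram matrix is positive definite. Multiplying
the `i`-th three-term relation by `(B i)ᵀ` and summing over `i` gives the evaluation formula.
-/

open Matrix

namespace Matrix

variable {R K ι m n : Type*}

def stack (B : ι → Matrix m n R) : Matrix (ι × m) n R :=
  of fun ik q => B ik.1 ik.2 q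

theorem stack_transpose_mul_stack [CommSemiring R] [Fintype ι] [Fintype m]
    (B : ι → Matrix m n R) :
    (stack B)ᵀ * stack B = ∑ i, (B i)ᵀ * B i := by
  ext p q
  simp only [mul_apply, transpose_apply, stack, of_apply, sum_apply, Fintype.sum_prod_type]

theorem mulVec_injective_of_rank_eq_card [Field K] [Fintype n] {A : Matrix m n K}
    (h : A.rank = Fintype.card n) : Function.Injective A.mulVec := by
  have hker : LinearMap.ker A.mulVecLin = ⊥ := by
    have := A.mulVecLin.finrank_range_add_finrank_ker
    rw [← Matrix.rank, h, Module.finrank_fintype_fun_eq_card, add_eq_left] at this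
    exact Submodule.finrank_eq_zero.mp this
  exact LinearMap.ker_eq_bot.mp hker

theorem posDef_sum_transpose_mul_self_of_rank_stack [Field K] [PartialOrder K] [StarRing K]
    [StarOrderedRing K] [TrivialStar K] [Fintype ι] [Fintype m] [Fintype n]
    {B : ι → Matrix m n K}
    (h : (stack B).rank = Fintype.card n) : (∑ i, (B i)ᵀ * B i).PosDef := by
  rw [← stack_transpose_mul_stack, ← conjTranspose_eq_transpose_of_trivial]
  exact .conjTranspose_mul_self _ (mulVec_injective_of_rank_eq_card h)

theorem sum_transpose_mul_self_mulVec_of_recurrence [CommRing R] {l : Type*} [Fintype ι]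
    [Fintype m] [Fintype n] [Fintype l]
    {c : ι → R} {p : m → R} {p' : n → R} {q : l → R}
    {A : ι → Matrix m m R} {B : ι → Matrix m n R} {C : ι → Matrix m l R}
    (hrec : ∀ i, c i • p = B i *ᵥ p' + A i *ᵥ p + C i *ᵥ q) :
    (∑ i, (B i)ᵀ * B i) *ᵥ p' =
      (∑ i, c i • (B i)ᵀ) *ᵥ p - (∑ i, (B i)ᵀ * A i) *ᵥ p - (∑ i, (B i)ᵀ * C i) *ᵥ q := by
  have hB : ∀ i, B i *ᵥ p' = c i • p - A i *ᵥ p - C i *ᵥ q := fun i => by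
    rw [hrec i]; abel
  simp only [sum_mulVec, ← mulVec_mulVec, hB, mulVec_sub, mulVec_smul, smul_mulVec,
    Finset.sum_sub_distrib]

end Matrix

theorem canonical_basis_direct_evaluation_general
    (d : ℕ)
    (rnm1 rn rnp1 : ℕ)
    (pnm1 : (Fin d → ℝ) → Fin rnm1 → ℝ)
    (pn : (Fin d → ℝ) → Fin rn → ℝ)
    (pnp1 : (Fin d → ℝ) → Fin rnp1 → ℝ)
    (A : Fin d → Matrix (Fin rn) (Fin rn) ℝ)
    (B : Fin d → Matrix (Fin rn) (Fin rnp1) ℝ)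
    (Bn : Fin d → Matrix (Fin rnm1) (Fin rn) ℝ)
    (httr : ∀ (i : Fin d) (x : Fin d → ℝ),
      x i • pn x = (B i).mulVec (pnp1 x) + (A i).mulVec (pn x) + (Bn i)ᵀ.mulVec (pnm1 x))
    (hrank : (Matrix.of fun (ik : Fin d × Fin rn) (q : Fin rnp1) => B ik.1 ik.2 q).rank = rnp1) :
    (∑ i, (B i)ᵀ * B i).PosDef ∧
      ∀ x : Fin d → ℝ,
        (∑ i, (B i)ᵀ * B i).mulVec (pnp1 x) =
          (∑ i, x i • (B i)ᵀ).mulVec (pn x) - (∑ i, (B i)ᵀ * A i).mulVec (pn x) -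
            (∑ i, (B i)ᵀ * (Bn i)ᵀ).mulVec (pnm1 x) :=
  ⟨posDef_sum_transpose_mul_self_of_rank_stack (by rwa [Fintype.card_fin]),
    fun x => sum_transpose_mul_self_mulVec_of_recurrence (httr · x)⟩

/-- Theorem 3.2 of the paper: if the recurrence matrices are in canonical form
(`Λ_{n+1} = Σᵢ B_{n+1,i}ᵀ B_{n+1,i}` diagonal) and the stacked matrix `B_{n+1}` has full rank
`r_{n+1}`, then `Λ_{n+1}` is positive definite and `p_{n+1}` can be evaluated directly from
`p_n` and `p_{n-1}`. -/
theorem canonical_basis_direct_evaluation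
    (d n : ℕ) (hd : 1 ≤ d)
    (rnm1 rn rnp1 : ℕ) (hrnm1 : 0 < rnm1) (hrn : 0 < rn) (hrnp1 : 0 < rnp1)
    (pnm1 : (Fin d → ℝ) → Fin rnm1 → ℝ)
    (pn : (Fin d → ℝ) → Fin rn → ℝ)
    (pnp1 : (Fin d → ℝ) → Fin rnp1 → ℝ)
    (A : Fin d → Matrix (Fin rn) (Fin rn) ℝ)
    (B : Fin d → Matrix (Fin rn) (Fin rnp1) ℝ)
    (Bn : Fin d → Matrix (Fin rnm1) (Fin rn) ℝ)
    (httr : ∀ (i : Fin d) (x : Fin d → ℝ),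
      x i • pn x = (B i).mulVec (pnp1 x) + (A i).mulVec (pn x) + (Bn i)ᵀ.mulVec (pnm1 x))
    (hrank : (Matrix.of fun (ik : Fin d × Fin rn) (q : Fin rnp1) => B ik.1 ik.2 q).rank = rnp1)
    (hdiag : (∑ i, (B i)ᵀ * B i).IsDiag) :
    (∑ i, (B i)ᵀ * B i).PosDef ∧
      ∀ x : Fin d → ℝ,
        (∑ i, (B i)ᵀ * B i).mulVec (pnp1 x) =
          (∑ i, x i • (B i)ᵀ).mulVec (pn x) - (∑ i, (B i)ᵀ * A i).mulVec (pn x) -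
            (∑ i, (B i)ᵀ * (Bn i)ᵀ).mulVec (pnm1 x) :=
  canonical_basis_direct_evaluation_general d rnm1 rn rnp1 pnm1 pn pnp1 A B Bn httr hrank
end

section
/- Let d ≥ 1, n ≥ 0, and let J_n : Fin r_n → {α ∈ ℕ_0^d : |α| = n} and J_{n+1} : Fin r_{n+1} → {α ∈ ℕ_0^d : |α| = n+1} be bijective enumerations of the multi-indices of total degree n and n+1, where r_m = C(m+d-1, m). Let c : Fin r_n × {1,…,d} → Fin r_{n+1} be defined by J_{n+1}(c(k,i)) = J_n(k) + e_i. Given real coefficients b_{i,m} for i ∈ {1,…,d} and m ≥ 1, define for each i the matrix B_{n+1,i} ∈ ℝ^{r_n × r_{n+1}} with entries (B_{n+1,i})_{k,q} = b_{i, J_n(k)_i + 1} if q = c(k,i) and 0 otherwise. Then Σ_{i=1}^d B_{n+1,i}^T B_{n+1,i} is a diagonal matrix, and its (q,q) entry equals Σ_{i : β_i ≥ 1} b_{i, β_i}², where β = J_{n+1}(q). -/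
open Matrix

/-- Corollary 4.2 of the paper: for the tensorial recurrence matrices
`(B_{n+1,i})_{k,q} = b_{i, J_n(k)_i + 1}` if `q = c(k,i)` and `0` otherwise,
the matrix `Σᵢ B_{n+1,i}ᵀ B_{n+1,i}` is diagonal, with `(q,q)` entry
`Σ_{i : β_i ≥ 1} b_{i,β_i}²` where `β = J_{n+1}(q)`. -/
theorem tensorial_recurrence_matrices_canonical
    (d n : ℕ) (hd : 1 ≤ d)
    (rn rnp1 : ℕ)
    (hrn : rn = Nat.choose (n + d - 1) n)
    (hrnp1 : rnp1 = Nat.choose (n + d) (n + 1))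
    (Jn : Fin rn → (Fin d → ℕ))
    (Jnp1 : Fin rnp1 → (Fin d → ℕ))
    (hJn_deg : ∀ k, ∑ j, Jn k j = n)
    (hJn_inj : Function.Injective Jn)
    (hJn_surj : ∀ α : Fin d → ℕ, (∑ j, α j) = n → ∃ k, Jn k = α)
    (hJnp1_deg : ∀ q, ∑ j, Jnp1 q j = n + 1)
    (hJnp1_inj : Function.Injective Jnp1)
    (hJnp1_surj : ∀ α : Fin d → ℕ, (∑ j, α j) = n + 1 → ∃ q, Jnp1 q = α)
    (c : Fin rn → Fin d → Fin rnp1)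
    (hc : ∀ k i, Jnp1 (c k i) = Jn k + Pi.single i 1)
    (b : Fin d → ℕ → ℝ)
    (B : Fin d → Matrix (Fin rn) (Fin rnp1) ℝ)
    (hB : ∀ i k q, B i k q = if q = c k i then b i (Jn k i + 1) else 0) :
    (∑ i, (B i)ᵀ * B i).IsDiag ∧
      ∀ q : Fin rnp1,
        (∑ i, (B i)ᵀ * B i) q q =
          ∑ i ∈ Finset.univ.filter (fun i : Fin d => 1 ≤ Jnp1 q i),
            (b i (Jnp1 q i)) ^ 2 := by

  have hentry : ∀ i (q q' : Fin rnp1), ((B i)ᵀ * B i) q q' =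
      ∑ k, (if q = c k i then b i (Jn k i + 1) else 0) *
           (if q' = c k i then b i (Jn k i + 1) else 0) := by
    intro i q q'
    simp [Matrix.mul_apply, Matrix.transpose_apply, hB]
  constructor
  · intro q q' hne
    rw [Matrix.sum_apply]
    refine Finset.sum_eq_zero fun i _ => ?_
    rw [hentry]
    refine Finset.sum_eq_zero fun k _ => ?_
    split_ifs with h1 h2
    · exact absurd (h1.trans h2.symm) hne
    · simp
    · simp
    · simp
  · intro q
    rw [Matrix.sum_apply, Finset.sum_filter]
    refine Finset.sum_congr rfl fun i _ => ?_
    rw [hentry]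
    by_cases hpos : 1 ≤ Jnp1 q i
    · -- there is a unique k with c k i = q
      set α : Fin d → ℕ := Function.update (Jnp1 q) i (Jnp1 q i - 1) with hα
      have hfun : α + Pi.single i 1 = Jnp1 q := by
        funext j
        by_cases hj : j = i
        · subst hj; simp [hα, Pi.single_apply]; omega
        · simp [hα, Function.update_of_ne hj, Pi.single_apply, hj]
      have hαsum : ∑ j, α j = n := by
        have h1 := hJnp1_deg q
        rw [← hfun] at h1
        simp [Finset.sum_add_distrib, Pi.single_apply] at h1
        omega
      obtain ⟨k₀, hk₀⟩ := hJn_surj α hαsum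
      have hck : c k₀ i = q := by
        apply hJnp1_inj
        rw [hc, hk₀, hfun]
      rw [Finset.sum_eq_single k₀, if_pos hpos]
      · rw [if_pos hck.symm, hk₀]
        have : α i + 1 = Jnp1 q i := by simp [hα, Function.update_self]; omega
        rw [this, sq]
      · intro k _ hk
        rw [if_neg, zero_mul]
        intro h
        apply hk
        apply hJn_inj
        have := hc k i
        rw [← h] at this
        have h2 : Jn k + Pi.single i 1 = Jn k₀ + Pi.single i 1 := by
          rw [← this, ← hc k₀ i, hck]
        funext j
        have := congrFun h2 j
        simpa using this
      · intro h; exact absurd (Finset.mem_univ k₀) h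
    · rw [if_neg hpos]
      refine Finset.sum_eq_zero fun k _ => ?_
      rw [if_neg, zero_mul]
      intro h
      apply hpos
      have := congrFun (hc k i) i
      rw [← h] at this
      simp [Pi.single_apply] at this
      omega
end

section
/- Let d ≥ 1, n ≥ 1, let μ be a positive measure on ℝ^d, and let p_{n-1}, p_n, p_{n+1} be families of μ-square-integrable functions ℝ^d → ℝ of sizes r_{n-1}, r_n, r_{n+1} that are jointly orthonormal: ∫ p_m(x) p_k(x)^T dμ(x) = δ_{m,k} I for m,k ∈ {n-1,n,n+1}. Fix i, j ∈ {1,…,d} and suppose the pointwise three-term relations x_l p_n(x) = B_{n+1,l} p_{n+1}(x) + A_{n+1,l} p_n(x) + B_{n,l}^T p_{n-1}(x) hold for all x ∈ ℝ^d and l ∈ {i,j}. Define p̃_{n+1,l}(x) := x_l p_n(x) − A_{n+1,l} p_n(x) − B_{n,l}^T p_{n-1}(x) for l ∈ {i,j} and T_{n,i,j} := ∫ p̃_{n+1,i}(x) p̃_{n+1,j}(x)^T dμ(x). Then T_{n,i,j} = B_{n+1,i} B_{n+1,j}^T. -/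
/-! The three-term relation turns each modified family `p̃_{n+1,l}` into `B_{n+1,l} p_{n+1}`,
so `T` is the Gram matrix of two families of linear combinations of the orthonormal family
`p_{n+1}`, which is `B_{n+1,i} B_{n+1,j}ᵀ`. -/

open MeasureTheory Matrix

lemma integral_sum_mul_sum_of_orthonormal {α ι κ κ' : Type*} [MeasurableSpace α] {μ : Measure α}
    [Fintype ι] [DecidableEq ι] {p : ι → α → ℝ} (hp : ∀ a, MemLp (p a) 2 μ)
    (horth : ∀ a b, ∫ x, p a x * p b x ∂μ = if a = b then 1 else 0)
    (M : Matrix κ ι ℝ) (N : Matrix κ' ι ℝ) (k : κ) (l : κ') :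
    ∫ x, (∑ a, M k a * p a x) * (∑ b, N l b * p b x) ∂μ = (M * Nᵀ) k l := by
  have hint : ∀ a b, Integrable (fun x => M k a * N l b * (p a x * p b x)) μ := fun a b =>
    ((hp a).integrable_mul (hp b)).const_mul _
  calc ∫ x, (∑ a, M k a * p a x) * (∑ b, N l b * p b x) ∂μ
      = ∫ x, ∑ a, ∑ b, M k a * N l b * (p a x * p b x) ∂μ := by
        congr with x
        simp only [Finset.sum_mul_sum]
        exact Finset.sum_congr rfl fun a _ => Finset.sum_congr rfl fun b _ => by ring
    _ = ∑ a, ∑ b, M k a * N l b * ∫ x, p a x * p b x ∂μ := by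
        rw [integral_finsetSum _ fun a _ => integrable_finsetSum _ fun b _ => hint a b]
        refine Finset.sum_congr rfl fun a _ => ?_
        rw [integral_finsetSum _ fun b _ => hint a b]
        simp only [integral_const_mul]
    _ = (M * Nᵀ) k l := by
        simp [horth, mul_apply]

theorem stieltjes_mixed_moment_general
    (d : ℕ)
    (rnm1 rn rnp1 : ℕ)
    (μ : Measure (Fin d → ℝ))
    (pnm1 : Fin rnm1 → (Fin d → ℝ) → ℝ)
    (pn : Fin rn → (Fin d → ℝ) → ℝ)
    (pnp1 : Fin rnp1 → (Fin d → ℝ) → ℝ)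
    (hL2np1 : ∀ a, MemLp (pnp1 a) 2 μ)
    (horth_np1 : ∀ a b, ∫ x, pnp1 a x * pnp1 b x ∂μ = if a = b then (1 : ℝ) else 0)
    (i j : Fin d)
    (A : Fin d → Matrix (Fin rn) (Fin rn) ℝ)
    (B : Fin d → Matrix (Fin rn) (Fin rnp1) ℝ)
    (Bn : Fin d → Matrix (Fin rnm1) (Fin rn) ℝ)
    (httr : ∀ l ∈ ({i, j} : Set (Fin d)), ∀ (x : Fin d → ℝ) (k : Fin rn),
      x l * pn k x =
        (∑ q, B l k q * pnp1 q x) + (∑ a, A l k a * pn a x) +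
          (∑ a, Bn l a k * pnm1 a x))
    (ptilde : Fin d → Fin rn → (Fin d → ℝ) → ℝ)
    (hptilde : ∀ l ∈ ({i, j} : Set (Fin d)), ∀ (k : Fin rn) (x : Fin d → ℝ),
      ptilde l k x =
        x l * pn k x - (∑ a, A l k a * pn a x) - (∑ a, Bn l a k * pnm1 a x))
    (T : Matrix (Fin rn) (Fin rn) ℝ)
    (hT : ∀ k l, T k l = ∫ x, ptilde i k x * ptilde j l x ∂μ) :
    T = B i * (B j)ᵀ := by
  have ptilde_eq : ∀ l ∈ ({i, j} : Set (Fin d)), ∀ k x,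
      ptilde l k x = ∑ q, B l k q * pnp1 q x := fun l hl k x => by
    rw [hptilde l hl k x, httr l hl x k]
    ring
  ext k l
  rw [hT, ← integral_sum_mul_sum_of_orthonormal hL2np1 horth_np1]
  congr with x
  rw [ptilde_eq i (by simp) k x, ptilde_eq j (by simp) l x]

/-- mixed-moment identity of Section 5.2.3 of the paper: the mixed Stieltjes
moment matrix `T_{n,i,j} = ∫ p̃_{n+1,i} p̃_{n+1,j}ᵀ dμ` of the modified families
`p̃_{n+1,l} = x_l p_n − A_{n+1,l} p_n − B_{n,l}ᵀ p_{n-1}` equals `B_{n+1,i} B_{n+1,j}ᵀ`. -/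
theorem stieltjes_mixed_moment
    (d n : ℕ) (hd : 1 ≤ d) (hn : 1 ≤ n)
    (rnm1 rn rnp1 : ℕ) (hrnm1 : 0 < rnm1) (hrn : 0 < rn) (hrnp1 : 0 < rnp1)
    (μ : Measure (Fin d → ℝ))
    (pnm1 : Fin rnm1 → (Fin d → ℝ) → ℝ)
    (pn : Fin rn → (Fin d → ℝ) → ℝ)
    (pnp1 : Fin rnp1 → (Fin d → ℝ) → ℝ)
    (hL2nm1 : ∀ a, MemLp (pnm1 a) 2 μ)
    (hL2n : ∀ a, MemLp (pn a) 2 μ)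
    (hL2np1 : ∀ a, MemLp (pnp1 a) 2 μ)
    (horth_nm1 : ∀ a b, ∫ x, pnm1 a x * pnm1 b x ∂μ = if a = b then (1 : ℝ) else 0)
    (horth_n : ∀ a b, ∫ x, pn a x * pn b x ∂μ = if a = b then (1 : ℝ) else 0)
    (horth_np1 : ∀ a b, ∫ x, pnp1 a x * pnp1 b x ∂μ = if a = b then (1 : ℝ) else 0)
    (horth_nm1_n : ∀ a b, ∫ x, pnm1 a x * pn b x ∂μ = 0)
    (horth_nm1_np1 : ∀ a b, ∫ x, pnm1 a x * pnp1 b x ∂μ = 0)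
    (horth_n_np1 : ∀ a b, ∫ x, pn a x * pnp1 b x ∂μ = 0)
    (i j : Fin d)
    (A : Fin d → Matrix (Fin rn) (Fin rn) ℝ)
    (B : Fin d → Matrix (Fin rn) (Fin rnp1) ℝ)
    (Bn : Fin d → Matrix (Fin rnm1) (Fin rn) ℝ)
    (httr : ∀ l ∈ ({i, j} : Set (Fin d)), ∀ (x : Fin d → ℝ) (k : Fin rn),
      x l * pn k x =
        (∑ q, B l k q * pnp1 q x) + (∑ a, A l k a * pn a x) +
          (∑ a, Bn l a k * pnm1 a x))
    (ptilde : Fin d → Fin rn → (Fin d → ℝ) → ℝ)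
    (hptilde : ∀ l ∈ ({i, j} : Set (Fin d)), ∀ (k : Fin rn) (x : Fin d → ℝ),
      ptilde l k x =
        x l * pn k x - (∑ a, A l k a * pn a x) - (∑ a, Bn l a k * pnm1 a x))
    (T : Matrix (Fin rn) (Fin rn) ℝ)
    (hT : ∀ k l, T k l = ∫ x, ptilde i k x * ptilde j l x ∂μ) :
    T = B i * (B j)ᵀ :=
  stieltjes_mixed_moment_general d rnm1 rn rnp1 μ pnm1 pn pnp1 hL2np1 horth_np1 i j A B Bn httr
    ptilde hptilde T hT
end

section
/- Let r' ≤ r ≤ R be positive integers and set Δ = R − r. Let B_{n,1}, B_{n,j} ∈ ℝ^{r'×r} and B_{n+1,1}, B_{n+1,j} ∈ ℝ^{r×R} be matrices satisfying the commuting condition B_{n,1} B_{n+1,j} = B_{n,j} B_{n+1,1}. Suppose the last Δ columns of B_{n+1,1} are zero, and that B_{n+1,j} = U Σ V^T where U ∈ ℝ^{r×r}, Σ ∈ ℝ^{r×r}, and V ∈ ℝ^{R×r} is written in block-row form V = (V̂ ; Ṽ) with V̂ ∈ ℝ^{r×r} and Ṽ ∈ ℝ^{Δ×r}. Then B_{n,1}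 U Σ Ṽ^T = 0; that is, every column of Ṽ^T lies in the kernel of the matrix K := B_{n,1} U Σ ∈ ℝ^{r'×r}. -/
open Matrix

/-- kernel condition, Section 5.2.6 of the paper: if the commuting condition
`B_{n,1} B_{n+1,j} = B_{n,j} B_{n+1,1}` holds, the last `Δ = R − r` columns of `B_{n+1,1}`
vanish, and `B_{n+1,j} = U Σ (V̂ ; Ṽ)ᵀ`, then `B_{n,1} U Σ Ṽᵀ = 0`, i.e. the columns of
`Ṽᵀ` lie in the kernel of `K = B_{n,1} U Σ`. -/
theorem kernel_condition_for_Vtilde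
    (r' r R : ℕ) (hr' : 0 < r') (hr : 0 < r) (hR : 0 < R)
    (hle1 : r' ≤ r) (hle2 : r ≤ R)
    (Bn1 Bnj : Matrix (Fin r') (Fin r) ℝ)
    (Bnp11 Bnp1j : Matrix (Fin r) (Fin r ⊕ Fin (R - r)) ℝ)
    (hcc : Bn1 * Bnp1j = Bnj * Bnp11)
    (hzero : ∀ (k : Fin r) (q : Fin (R - r)), Bnp11 k (Sum.inr q) = 0)
    (U S : Matrix (Fin r) (Fin r) ℝ)
    (Vhat : Matrix (Fin r) (Fin r) ℝ)
    (Vtil : Matrix (Fin (R - r)) (Fin r) ℝ)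
    (hsvd : Bnp1j = U * S * (Matrix.fromRows Vhat Vtil)ᵀ) :
    Bn1 * U * S * Vtilᵀ = 0 := by
  ext i q
  have h1 : (Bn1 * Bnp1j) i (Sum.inr q) = (Bn1 * U * S * Vtilᵀ) i q := by
    rw [hsvd, ← Matrix.mul_assoc, ← Matrix.mul_assoc]
    simp [Matrix.mul_apply]
  have h2 : (Bnj * Bnp11) i (Sum.inr q) = 0 := by
    simp [Matrix.mul_apply, hzero]
  simp [← h1, hcc, h2]
end
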